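/- If E is a locally convex semiclosed preordered space whose preorder is closed (graph closed in E × E), then the quotient E/∼ is a Hausdorff space. -/

import Mathlib

open Set Topology

def IsIncreasingSet {E : Type*} [Preorder E] (S : Set E) : Prop :=
  ∀ ⦃x⦄, x ∈ S → ∀ ⦃y⦄, x ≤ y → y ∈ S
def IsDecreasingSet {E : Type*} [Preorder E] (S : Set E) : Prop :=
  ∀ ⦃x⦄, x ∈ S → ∀ ⦃y⦄, y ≤ x → y ∈ S
def IsOrderConvexSet {E : Type*} [Preorder E] (S : Set E) : Prop :=
  ∃ A B : Set E, IsIncreasingSet A ∧ IsDecreasingSet B ∧ S = A ∩ B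

instance {E : Type*} [TopologicalSpace E] [Preorder E] :
    TopologicalSpace (Antisymmetrization E (· ≤ ·)) :=
  inferInstanceAs (TopologicalSpace (Quotient (AntisymmRel.setoid E (· ≤ ·))))

/-!
Local convexity makes every open set saturated for `∼`, so the quotient map `E → E/∼` is open.
For an open quotient map, the quotient is Hausdorff as soon as the relation `∼` is closed in
`E × E`, and here `∼` is the intersection of the closed graph of `≤` with its transpose.
-/

section

variable {E : Type*} [Preorder E]

theorem IsOrderConvexSet.mem_of_antisymmRel {C : Set E} (hC : IsOrderConvexSet C) {x y : E}
    (hx : x ∈ C) (hxy : AntisymmRel (· ≤ ·) x y) : y ∈ C := by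
  obtain ⟨A, B, hA, hB, rfl⟩ := hC
  exact ⟨hA hx.1 hxy.1, hB hx.2 hxy.2⟩

variable [TopologicalSpace E]

theorem IsOpen.mem_of_antisymmRel
    (hconv : ∀ x : E, ∀ O ∈ 𝓝 x, ∃ C ∈ 𝓝 x, IsOrderConvexSet C ∧ C ⊆ O)
    {O : Set E} (hO : IsOpen O) {x y : E} (hx : x ∈ O) (hxy : AntisymmRel (· ≤ ·) x y) :
    y ∈ O := by
  obtain ⟨C, hCx, hC, hCO⟩ := hconv x O (hO.mem_nhds hx)
  exact hCO (hC.mem_of_antisymmRel (mem_of_mem_nhds hCx) hxy)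

theorem isOpenQuotientMap_toAntisymmetrization
    (hconv : ∀ x : E, ∀ O ∈ 𝓝 x, ∃ C ∈ 𝓝 x, IsOrderConvexSet C ∧ C ⊆ O) :
    IsOpenQuotientMap (toAntisymmetrization (α := E) (· ≤ ·)) := by
  have hq : IsQuotientMap (toAntisymmetrization (α := E) (· ≤ ·)) := isQuotientMap_quotient_mk'
  refine .of_isOpenMap_isQuotientMap (fun O hO ↦ ?_) hq
  have hsat : toAntisymmetrization (· ≤ ·) ⁻¹' (toAntisymmetrization (· ≤ ·) '' O) = O := by
    refine Subset.antisymm ?_ (subset_preimage_image _ _)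
    rintro y ⟨x, hx, hxy⟩
    exact hO.mem_of_antisymmRel hconv hx (Quotient.exact hxy)
  rw [← hq.isOpen_preimage, hsat]
  exact hO

theorem isClosed_setOf_antisymmRel (hclosed : IsClosed {p : E × E | p.1 ≤ p.2}) :
    IsClosed {p : E × E | AntisymmRel (· ≤ ·) p.1 p.2} :=
  hclosed.inter (hclosed.preimage continuous_swap)

end

theorem locallyConvex_semiclosed_closedPreorder_quotient_T2_general
    {E : Type*} [TopologicalSpace E] [Preorder E]
    (hclosed : IsClosed {p : E × E | p.1 ≤ p.2})
    (hconv : ∀ x : E, ∀ O ∈ 𝓝 x, ∃ C ∈ 𝓝 x, IsOrderConvexSet C ∧ C ⊆ O) :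
    T2Space (Antisymmetrization E (· ≤ ·)) := by
  rw [t2Space_iff_of_isOpenQuotientMap (isOpenQuotientMap_toAntisymmetrization hconv)]
  convert isClosed_setOf_antisymmRel hclosed using 3
  exact Quotient.eq

theorem locallyConvex_semiclosed_closedPreorder_quotient_T2
    {E : Type*} [TopologicalSpace E] [Preorder E]
    (hsemi : ∀ x : E, IsClosed {y | x ≤ y} ∧ IsClosed {y | y ≤ x})
    (hclosed : IsClosed {p : E × E | p.1 ≤ p.2})
    (hconv : ∀ x : E, ∀ O ∈ 𝓝 x, ∃ C ∈ 𝓝 x, IsOrderConvexSet C ∧ C ⊆ O) :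
    T2Space (Antisymmetrization E (· ≤ ·)) :=
  locallyConvex_semiclosed_closedPreorder_quotient_T2_general hclosed hconv
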